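/- Let n ≥ 4 be an even integer, and let γ_n : {0,…,n−1} → [0,∞) and γ_{2n} : {0,…,2n−1} → [0,∞) satisfy: γ_n(0) = γ_{2n}(0) = 0; γ_n(k) = γ_n(n−k) for 1 ≤ k ≤ n−1; γ_{2n}(k) = γ_{2n}(2n−k) for 1 ≤ k ≤ 2n−1; γ_{2n}(k) ≥ γ_n(k) for 1 ≤ k ≤ n/2 − 1; and γ_{2n}(n−k) − γ_{2n}(k) − 1 ≥ 0 for 0 ≤ k ≤ n/2 − 1. Assume further that for all real x ≥ 0 and all r_a, r_b ∈ [0,1]: (2γ_{2n}(n/2) − 2γ_n(n/2) − 1)·(r_a + r_b·x²) + γ_{2n}(n)·(1−x)² − (1 + x²) + 2x·√((1+r_a)(1+r_b)) ≥ 0. Then for all a, b ∈ [0,∞)ⁿ, writing λ = (a_0, b_0, a_1, b_1, …, a_{n−1}, b_{n−1}) ∈ [0,∞)^{2n}: ⟨a, Γ(n)a⟩ + ⟨b, Γ(n)b⟩ + (1/(2n))·(‖a‖₂ − ‖b‖₂)² ≤ 2⟨λ, Γ(2n)λ⟩. -/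

import Mathlib

open scoped BigOperators ComplexOrder

/-- The `m × m` DFT matrix with entries `e^{2πijk/m}`. -/
noncomputable def dftMatrix (m : ℕ) : Matrix (Fin m) (Fin m) ℂ :=
  Matrix.of fun j k => Complex.exp (2 * Real.pi * Complex.I * (j.val : ℂ) * (k.val : ℂ) / m)

/-- `Γ(m) = (1/m)·F_m·diag(γ(0),…,γ(m-1))·F_m⁻¹` for a weight `γ : ℕ → ℝ`. -/
noncomputable def GammaMat (m : ℕ) (γ : ℕ → ℝ) : Matrix (Fin m) (Fin m) ℂ :=
  (1 / m : ℂ) • (dftMatrix m * Matrix.diagonal (fun k : Fin m => (γ k.val : ℂ)) * (dftMatrix m)⁻¹)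

/-- `⟨u, Mu⟩ = ∑_j conj(u_j) (Mu)_j` for a real vector `u`. -/
noncomputable def quadForm (m : ℕ) (M : Matrix (Fin m) (Fin m) ℂ) (u : Fin m → ℝ) : ℂ :=
  ∑ j : Fin m, (starRingEnd ℂ) (u j : ℂ) * M.mulVec (fun i => (u i : ℂ)) j

/-- The interleaved vector `λ = (a_0, b_0, a_1, b_1, …, a_{n-1}, b_{n-1})`. -/
noncomputable def interleave (n : ℕ) (a b : Fin n → ℝ) : Fin (2 * n) → ℝ :=
  fun j =>
    if j.val % 2 = 0 then a ⟨j.val / 2, by have := j.isLt; omega⟩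
    else b ⟨j.val / 2, by have := j.isLt; omega⟩

/-!
The DFT diagonalises `Γ(m)`: `⟨u, Γ(m)u⟩ = m⁻² ∑ₖ γ(k) |û(k)|²` with `û(k) = ∑ⱼ uⱼ ζₘ^{jk}`,
`ζₘ = e^{2πi/m}`.
The transform of the interleaved vector at the frequencies `k` and `n + k` is
`â(k) ± ζ₂ₙᵏ b̂(k)`, so the claim reads `n (‖a‖ − ‖b‖)² ≤ ∑_{k<n} g(k)`, where `g(k)` is the gain
of the frequency pair `k, n + k`. For `k ≠ 0, n/2` the parallelogram law and the weight
conditions give `g(k) ≥ (|â(k)| − |b̂(k)|)²`. At `k = 0` and `k = n/2` the coefficients are the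
real numbers `∑ aⱼ ≥ |∑ (−1)ʲ aⱼ|`, and the scalar inequality, applied after normalising by
`∑ aⱼ`, bounds `g(0) + g(n/2)` from below by the squared difference of the norms of the pairs
`(â(0), â(n/2))` and `(b̂(0), b̂(n/2))`. Summing, the reverse triangle inequality in `ℓ²` and
Parseval finish the proof.
-/

open Finset Matrix

noncomputable def unitRoot (m : ℕ) : ℂ := Complex.exp (2 * Real.pi * Complex.I / m)

lemma isPrimitiveRoot_unitRoot {m : ℕ} (hm : m ≠ 0) : IsPrimitiveRoot (unitRoot m) m :=
  Complex.isPrimitiveRoot_exp m hm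

lemma norm_unitRoot (m : ℕ) : ‖unitRoot m‖ = 1 := by
  rw [unitRoot, Complex.norm_exp]
  simp

lemma star_unitRoot (m : ℕ) : star (unitRoot m) = (unitRoot m)⁻¹ := by
  rw [Complex.inv_def, ← Complex.sq_norm, norm_unitRoot]
  simp

lemma unitRoot_mul_pow {k : ℕ} (hk : k ≠ 0) (m : ℕ) : unitRoot (k * m) ^ k = unitRoot m := by
  rw [unitRoot, unitRoot, ← Complex.exp_nat_mul]
  congr 1
  push_cast
  field_simp

lemma unitRoot_two : unitRoot 2 = -1 := by
  rw [unitRoot, ← Complex.exp_pi_mul_I]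
  push_cast
  ring_nf

lemma unitRoot_four : unitRoot 4 = Complex.I := by
  rw [unitRoot]
  convert Complex.exp_pi_div_two_mul_I using 2
  push_cast
  ring

lemma unitRoot_four_mul_pow {m : ℕ} (hm : m ≠ 0) : unitRoot (2 * (2 * m)) ^ m = Complex.I := by
  rw [show 2 * (2 * m) = m * 4 by ring, unitRoot_mul_pow hm, unitRoot_four]

lemma dftMatrix_apply (m : ℕ) (j k : Fin m) : dftMatrix m j k = unitRoot m ^ (j.val * k.val) := by
  rw [dftMatrix, Matrix.of_apply, unitRoot, ← Complex.exp_nat_mul]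
  push_cast
  ring_nf

lemma IsPrimitiveRoot.sum_pow_mul_inv_pow {K : Type*} [Field K] {ζ : K} {m : ℕ}
    (hζ : IsPrimitiveRoot ζ m) (hm : m ≠ 0) (j k : Fin m) :
    ∑ l : Fin m, ζ ^ (j.val * l.val) * ζ⁻¹ ^ (k.val * l.val) = if j = k then (m : K) else 0 := by
  have hζ0 : ζ ≠ 0 := hζ.ne_zero hm
  have hterm : ∀ l : ℕ, ζ ^ (j.val * l) * ζ⁻¹ ^ (k.val * l) = (ζ ^ j.val / ζ ^ k.val) ^ l := by
    intro l
    rw [div_pow, ← pow_mul, ← pow_mul, inv_pow, div_eq_mul_inv]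
  simp_rw [Fin.sum_univ_eq_sum_range (fun l => ζ ^ (j.val * l) * ζ⁻¹ ^ (k.val * l)), hterm]
  split_ifs with hjk
  · simp [hjk, div_self (pow_ne_zero _ hζ0)]
  · have hne : ζ ^ j.val / ζ ^ k.val ≠ 1 := by
      rw [Ne, div_eq_one_iff_eq (pow_ne_zero _ hζ0)]
      exact fun h => hjk (Fin.ext (hζ.pow_inj j.isLt k.isLt h))
    rw [geom_sum_eq hne, div_pow, ← pow_mul, ← pow_mul, mul_comm j.val, mul_comm k.val, pow_mul,
      pow_mul, hζ.pow_eq_one]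
    simp

lemma dftMatrix_mul_conjTranspose {m : ℕ} (hm : m ≠ 0) :
    dftMatrix m * (dftMatrix m)ᴴ = (m : ℂ) • 1 := by
  ext j k
  rw [mul_apply, Matrix.smul_apply, one_apply, smul_eq_mul, mul_ite, mul_one, mul_zero,
    ← (isPrimitiveRoot_unitRoot hm).sum_pow_mul_inv_pow hm j k]
  simp only [conjTranspose_apply, dftMatrix_apply, star_pow, star_unitRoot]

lemma inv_dftMatrix {m : ℕ} (hm : m ≠ 0) : (dftMatrix m)⁻¹ = (m : ℂ)⁻¹ • (dftMatrix m)ᴴ := by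
  refine Matrix.inv_eq_right_inv ?_
  rw [Matrix.mul_smul, dftMatrix_mul_conjTranspose hm, smul_smul,
    inv_mul_cancel₀ (Nat.cast_ne_zero.mpr hm), one_smul]

noncomputable def dftCoeff (m : ℕ) (u : Fin m → ℝ) (k : ℕ) : ℂ :=
  ∑ j : Fin m, (u j : ℂ) * unitRoot m ^ (j.val * k)

lemma conjTranspose_dftMatrix_mulVec (m : ℕ) (u : Fin m → ℝ) (k : Fin m) :
    ((dftMatrix m)ᴴ *ᵥ fun i => (u i : ℂ)) k = star (dftCoeff m u k) := by
  simp only [mulVec, dotProduct, conjTranspose_apply, dftMatrix_apply, dftCoeff, star_sum,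
    star_mul', Complex.star_def, Complex.conj_ofReal, mul_comm]

lemma star_dotProduct_mul_conjTranspose_mulVec {ι R : Type*} [Fintype ι] [CommRing R] [StarRing R]
    (F D : Matrix ι ι R) (v : ι → R) :
    star v ⬝ᵥ (F * D * Fᴴ) *ᵥ v = star (Fᴴ *ᵥ v) ⬝ᵥ D *ᵥ (Fᴴ *ᵥ v) := by
  rw [← mulVec_mulVec, ← mulVec_mulVec, dotProduct_mulVec, star_mulVec, conjTranspose_conjTranspose]

lemma quadForm_eq_star_dotProduct (m : ℕ) (M : Matrix (Fin m) (Fin m) ℂ) (u : Fin m → ℝ) :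
    quadForm m M u = star (fun i => (u i : ℂ)) ⬝ᵥ M *ᵥ fun i => (u i : ℂ) := rfl

lemma quadForm_GammaMat {m : ℕ} (hm : m ≠ 0) (γ : ℕ → ℝ) (u : Fin m → ℝ) :
    quadForm m (GammaMat m γ) u
      = (((∑ k ∈ range m, γ k * ‖dftCoeff m u k‖ ^ 2) / m ^ 2 : ℝ) : ℂ) := by
  rw [quadForm_eq_star_dotProduct, GammaMat, inv_dftMatrix hm, mul_smul_comm, smul_smul,
    smul_mulVec, dotProduct_smul, star_dotProduct_mul_conjTranspose_mulVec]
  simp only [dotProduct, mulVec_diagonal, conjTranspose_dftMatrix_mulVec, star_star, Pi.star_apply]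
  rw [← Fin.sum_univ_eq_sum_range (fun k => γ k * ‖dftCoeff m u k‖ ^ 2)]
  push_cast
  rw [Finset.sum_div, Finset.smul_sum]
  refine Finset.sum_congr rfl fun k _ => ?_
  rw [smul_eq_mul, Complex.star_def]
  linear_combination ((γ k : ℂ) / m ^ 2) * Complex.mul_conj' (dftCoeff m u k)

lemma sum_sq_norm_dftCoeff {m : ℕ} (hm : m ≠ 0) (u : Fin m → ℝ) :
    ∑ k ∈ range m, ‖dftCoeff m u k‖ ^ 2 = m * ∑ j, u j ^ 2 := by
  have h := star_dotProduct_mul_conjTranspose_mulVec (dftMatrix m) 1 (fun i => (u i : ℂ))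
  rw [mul_one, dftMatrix_mul_conjTranspose hm, one_mulVec, smul_mulVec, one_mulVec,
    dotProduct_smul] at h
  simp only [dotProduct, conjTranspose_dftMatrix_mulVec, Pi.star_apply, Complex.star_def,
    Complex.conj_mul', Complex.norm_conj, Complex.norm_real, Real.norm_eq_abs] at h
  norm_cast at h
  rw [← Fin.sum_univ_eq_sum_range (fun k => ‖dftCoeff m u k‖ ^ 2)]
  simpa [sq_abs] using h.symm

lemma dftCoeff_add_self {m : ℕ} (hm : m ≠ 0) (u : Fin m → ℝ) (k : ℕ) :
    dftCoeff m u (m + k) = dftCoeff m u k := by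
  refine Finset.sum_congr rfl fun j _ => ?_
  rw [mul_add, pow_add, mul_comm j.val m, pow_mul, (isPrimitiveRoot_unitRoot hm).pow_eq_one,
    one_pow, one_mul]

lemma dftCoeff_zero (m : ℕ) (u : Fin m → ℝ) : dftCoeff m u 0 = ((∑ j, u j : ℝ) : ℂ) := by
  simp [dftCoeff]

lemma dftCoeff_two_mul_self {m : ℕ} (hm : m ≠ 0) (u : Fin (2 * m) → ℝ) :
    dftCoeff (2 * m) u m = ((∑ j, (-1) ^ j.val * u j : ℝ) : ℂ) := by
  have hζ : unitRoot (2 * m) ^ m = -1 := by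
    rw [mul_comm, unitRoot_mul_pow hm, unitRoot_two]
  push_cast
  refine Finset.sum_congr rfl fun j _ => ?_
  rw [mul_comm j.val, pow_mul, hζ, mul_comm]

lemma Fin.sum_univ_two_mul {M : Type*} [AddCommMonoid M] (n : ℕ) (f : Fin (2 * n) → M) :
    ∑ j, f j = ∑ i : Fin n, (f ⟨2 * i, by omega⟩ + f ⟨2 * i + 1, by omega⟩) := by
  rw [← (finProdFinEquiv.trans (finCongr (mul_comm n 2))).sum_comp, Fintype.sum_prod_type]
  refine Finset.sum_congr rfl fun i _ => ?_
  rw [Fin.sum_univ_two]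
  congr 2 <;> ext <;> simp [add_comm]

lemma interleave_two_mul (n : ℕ) (a b : Fin n → ℝ) (i : Fin n) :
    interleave n a b ⟨2 * i, by omega⟩ = a i := by
  simp [interleave]

lemma interleave_two_mul_add_one (n : ℕ) (a b : Fin n → ℝ) (i : Fin n) :
    interleave n a b ⟨2 * i + 1, by omega⟩ = b i := by
  simp only [interleave, Nat.mul_add_mod_self_left, Nat.one_mod, one_ne_zero, if_false]
  congr
  omega

lemma dftCoeff_interleave (n : ℕ) (a b : Fin n → ℝ) (k : ℕ) :
    dftCoeff (2 * n) (interleave n a b) k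
      = dftCoeff n a k + unitRoot (2 * n) ^ k * dftCoeff n b k := by
  have hsq : unitRoot (2 * n) ^ 2 = unitRoot n := unitRoot_mul_pow two_ne_zero n
  rw [dftCoeff, Fin.sum_univ_two_mul, Finset.sum_add_distrib, dftCoeff, dftCoeff, Finset.mul_sum]
  congr 1 <;> refine Finset.sum_congr rfl fun i _ => ?_
  · rw [interleave_two_mul, mul_assoc, pow_mul, hsq]
  · rw [interleave_two_mul_add_one, add_mul, one_mul, pow_add, mul_assoc, pow_mul, hsq]
    ring

lemma dftCoeff_interleave_add_self {n : ℕ} (hn : n ≠ 0) (a b : Fin n → ℝ) (k : ℕ) :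
    dftCoeff (2 * n) (interleave n a b) (n + k)
      = dftCoeff n a k - unitRoot (2 * n) ^ k * dftCoeff n b k := by
  rw [dftCoeff_interleave, dftCoeff_add_self hn, dftCoeff_add_self hn, pow_add, mul_comm 2 n,
    unitRoot_mul_pow hn, unitRoot_two]
  ring

noncomputable def pairGain (n : ℕ) (γn γ2n : ℕ → ℝ) (a b : Fin n → ℝ) (k : ℕ) : ℝ :=
  γ2n k * ‖dftCoeff n a k + unitRoot (2 * n) ^ k * dftCoeff n b k‖ ^ 2
    + γ2n (n + k) * ‖dftCoeff n a k - unitRoot (2 * n) ^ k * dftCoeff n b k‖ ^ 2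
    - 2 * γn k * (‖dftCoeff n a k‖ ^ 2 + ‖dftCoeff n b k‖ ^ 2)

lemma sum_pairGain {n : ℕ} (hn : n ≠ 0) (γn γ2n : ℕ → ℝ) (a b : Fin n → ℝ) :
    ∑ k ∈ range n, pairGain n γn γ2n a b k
      = ∑ k ∈ range (2 * n), γ2n k * ‖dftCoeff (2 * n) (interleave n a b) k‖ ^ 2
        - 2 * ∑ k ∈ range n, γn k * ‖dftCoeff n a k‖ ^ 2
        - 2 * ∑ k ∈ range n, γn k * ‖dftCoeff n b k‖ ^ 2 := by
  rw [show range (2 * n) = range (n + n) by rw [two_mul], Finset.sum_range_add,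
    ← Finset.sum_add_distrib, Finset.mul_sum, Finset.mul_sum, ← Finset.sum_sub_distrib,
    ← Finset.sum_sub_distrib]
  refine Finset.sum_congr rfl fun k _ => ?_
  rw [dftCoeff_interleave, dftCoeff_interleave_add_self hn, pairGain]
  ring

lemma two_mul_quadForm_interleave_sub {n : ℕ} (hn : n ≠ 0) (γn γ2n : ℕ → ℝ) (a b : Fin n → ℝ) :
    2 * quadForm (2 * n) (GammaMat (2 * n) γ2n) (interleave n a b)
        - quadForm n (GammaMat n γn) a - quadForm n (GammaMat n γn) b
      = (((∑ k ∈ range n, pairGain n γn γ2n a b k) / (2 * n ^ 2) : ℝ) : ℂ) := by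
  rw [quadForm_GammaMat (mul_ne_zero two_ne_zero hn), quadForm_GammaMat hn,
    quadForm_GammaMat hn, sum_pairGain hn]
  push_cast
  field_simp

section pairGain

variable {γn γ2n : ℕ → ℝ}

lemma pairGain_zero (h₀ : γn 0 = 0) (h₀' : γ2n 0 = 0) (n : ℕ) (a b : Fin n → ℝ) :
    pairGain n γn γ2n a b 0 = γ2n n * (∑ j, a j - ∑ j, b j) ^ 2 := by
  rw [pairGain, dftCoeff_zero, dftCoeff_zero, h₀, h₀', pow_zero, one_mul, add_zero,
    ← Complex.ofReal_sub, Complex.norm_real, Real.norm_eq_abs, sq_abs]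
  ring

lemma pairGain_two_mul_self {m : ℕ} (hm : m ≠ 0) (hsym : γ2n (2 * m + m) = γ2n m)
    (a b : Fin (2 * m) → ℝ) :
    pairGain (2 * m) γn γ2n a b m
      = 2 * (γ2n m - γn m)
        * ((∑ j, (-1) ^ j.val * a j) ^ 2 + (∑ j, (-1) ^ j.val * b j) ^ 2) := by
  rw [pairGain, dftCoeff_two_mul_self hm, dftCoeff_two_mul_self hm, unitRoot_four_mul_pow hm, hsym]
  generalize ∑ j, (-1) ^ j.val * a j = A
  generalize ∑ j, (-1) ^ j.val * b j = B
  have hplus : ‖(A : ℂ) + Complex.I * B‖ ^ 2 = A ^ 2 + B ^ 2 := by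
    rw [Complex.sq_norm, mul_comm, Complex.normSq_add_mul_I]
  have hminus : ‖(A : ℂ) - Complex.I * B‖ ^ 2 = A ^ 2 + B ^ 2 := by
    rw [Complex.sq_norm, mul_comm, sub_eq_add_neg, ← neg_mul, ← Complex.ofReal_neg,
      Complex.normSq_add_mul_I, neg_sq]
  rw [hplus, hminus, Complex.norm_real, Complex.norm_real, Real.norm_eq_abs, Real.norm_eq_abs,
    sq_abs, sq_abs]
  ring

end pairGain

lemma sq_norm_sub_norm_le_of_weights {E : Type*} [NormedAddCommGroup E] [InnerProductSpace ℝ E]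
    {c c₁ c₂ : ℝ} (hc : (c ≤ c₁ ∧ c + 1 ≤ c₂) ∨ (c ≤ c₂ ∧ c + 1 ≤ c₁)) (x y : E) :
    (‖x‖ - ‖y‖) ^ 2 ≤ c₁ * ‖x + y‖ ^ 2 + c₂ * ‖x - y‖ ^ 2 - 2 * c * (‖x‖ ^ 2 + ‖y‖ ^ 2) := by
  have hpar : ‖x + y‖ ^ 2 + ‖x - y‖ ^ 2 = 2 * (‖x‖ ^ 2 + ‖y‖ ^ 2) := by
    simpa only [sq] using parallelogram_law_with_norm ℝ x y
  have hsub : (‖x‖ - ‖y‖) ^ 2 ≤ ‖x - y‖ ^ 2 :=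
    sq_le_sq.mpr ((abs_norm_sub_norm_le x y).trans (le_abs_self _))
  have hadd : (‖x‖ - ‖y‖) ^ 2 ≤ ‖x + y‖ ^ 2 := by
    have h := abs_norm_sub_norm_le x (-y)
    rw [norm_neg, sub_neg_eq_add] at h
    exact sq_le_sq.mpr (h.trans (le_abs_self _))
  have hrhs : c₁ * ‖x + y‖ ^ 2 + c₂ * ‖x - y‖ ^ 2 - 2 * c * (‖x‖ ^ 2 + ‖y‖ ^ 2)
      = (c₁ - c) * ‖x + y‖ ^ 2 + (c₂ - c) * ‖x - y‖ ^ 2 := by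
    linear_combination c * hpar
  rw [hrhs]
  rcases hc with ⟨h₁, h₂⟩ | ⟨h₁, h₂⟩
  · nlinarith [mul_nonneg (sub_nonneg.2 h₁) (sq_nonneg ‖x + y‖),
      mul_nonneg (sub_nonneg.2 h₂) (sq_nonneg ‖x - y‖)]
  · nlinarith [mul_nonneg (sub_nonneg.2 h₁) (sq_nonneg ‖x - y‖),
      mul_nonneg (sub_nonneg.2 h₂) (sq_nonneg ‖x + y‖)]

lemma abs_sum_neg_one_pow_mul_le {n : ℕ} {a : Fin n → ℝ} (ha : ∀ i, 0 ≤ a i) :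
    |∑ j, (-1) ^ j.val * a j| ≤ ∑ j, a j :=
  (Finset.abs_sum_le_sum_abs _ _).trans_eq
    (Finset.sum_congr rfl fun j _ => by rw [abs_mul, abs_pow, abs_neg, abs_one, one_pow, one_mul,
      abs_of_nonneg (ha j)])

lemma sq_sqrt_add_sum_sub_sqrt_add_sum_le {ι : Type*} (s : Finset ι) {X Y : ℝ} (hX : 0 ≤ X)
    (hY : 0 ≤ Y) (f g : ι → ℝ) :
    (√(X + ∑ i ∈ s, f i ^ 2) - √(Y + ∑ i ∈ s, g i ^ 2)) ^ 2
      ≤ (√X - √Y) ^ 2 + ∑ i ∈ s, (f i - g i) ^ 2 := by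
  have hcs := Real.sum_mul_le_sqrt_mul_sqrt (Finset.insertNone s) (fun o => o.elim √X f)
    (fun o => o.elim √Y g)
  simp only [Finset.sum_insertNone, Option.elim, Real.sq_sqrt hX, Real.sq_sqrt hY] at hcs
  have hexp : ∑ i ∈ s, (f i - g i) ^ 2
      = ∑ i ∈ s, f i ^ 2 + ∑ i ∈ s, g i ^ 2 - 2 * ∑ i ∈ s, f i * g i := by
    rw [Finset.mul_sum, ← Finset.sum_add_distrib, ← Finset.sum_sub_distrib]
    exact Finset.sum_congr rfl fun i _ => by ring
  have hF : 0 ≤ X + ∑ i ∈ s, f i ^ 2 := by positivity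
  have hG : 0 ≤ Y + ∑ i ∈ s, g i ^ 2 := by positivity
  rw [sub_sq, sub_sq, Real.sq_sqrt hF, Real.sq_sqrt hG, Real.sq_sqrt hX, Real.sq_sqrt hY, hexp]
  linarith

def ScalarCondition (κ G : ℝ) : Prop :=
  ∀ x : ℝ, 0 ≤ x → ∀ ra rb : ℝ, 0 ≤ ra → ra ≤ 1 → 0 ≤ rb → rb ≤ 1 →
    0 ≤ κ * (ra + rb * x ^ 2) + G * (1 - x) ^ 2 - (1 + x ^ 2) + 2 * x * √((1 + ra) * (1 + rb))

namespace ScalarCondition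

variable {κ G : ℝ}

lemma sq_sqrt_sub_sqrt_le_of_pos (h : ScalarCondition κ G) {A₀ B₀ A B : ℝ} (hA₀ : 0 < A₀)
    (hB₀ : 0 ≤ B₀) (hA : |A| ≤ A₀) (hB : |B| ≤ B₀) :
    (√(A₀ ^ 2 + A ^ 2) - √(B₀ ^ 2 + B ^ 2)) ^ 2
      ≤ G * (A₀ - B₀) ^ 2 + (κ + 1) * (A ^ 2 + B ^ 2) := by
  have hsq : ∀ {C C₀ : ℝ}, |C| ≤ C₀ → C ^ 2 ≤ C₀ ^ 2 := fun hC =>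
    sq_le_sq.mpr (hC.trans (le_abs_self _))
  -- If `B₀ = 0` then `rb = B² / 0 = 0` and `B = 0`, so `hrb` still holds.
  set x := B₀ / A₀
  set ra := A ^ 2 / A₀ ^ 2
  set rb := B ^ 2 / B₀ ^ 2
  have hx : B₀ = x * A₀ := (div_mul_cancel₀ B₀ hA₀.ne').symm
  have hra : A ^ 2 = ra * A₀ ^ 2 := (div_mul_cancel₀ _ (by positivity)).symm
  have hrb : B ^ 2 = rb * B₀ ^ 2 := by
    rcases hB₀.eq_or_lt with hB₀ | hB₀
    · simp [rb, ← hB₀, abs_nonpos_iff.mp (hB.trans_eq hB₀.symm)]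
    · exact (div_mul_cancel₀ _ (by positivity)).symm
  have hra1 : ra ≤ 1 := div_le_one_of_le₀ (hsq hA) (sq_nonneg _)
  have hrb1 : rb ≤ 1 := div_le_one_of_le₀ (hsq hB) (sq_nonneg _)
  have hH := h x (div_nonneg hB₀ hA₀.le) ra rb (by positivity) hra1 (by positivity) hrb1
  rw [Real.sqrt_mul (by positivity)] at hH
  have hsa : √(A₀ ^ 2 + A ^ 2) = A₀ * √(1 + ra) := by
    rw [hra, show A₀ ^ 2 + ra * A₀ ^ 2 = A₀ ^ 2 * (1 + ra) by ring, Real.sqrt_mul (sq_nonneg _),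
      Real.sqrt_sq hA₀.le]
  have hsb : √(B₀ ^ 2 + B ^ 2) = B₀ * √(1 + rb) := by
    rw [hrb, show B₀ ^ 2 + rb * B₀ ^ 2 = B₀ ^ 2 * (1 + rb) by ring, Real.sqrt_mul (sq_nonneg _),
      Real.sqrt_sq hB₀]
  rw [hsa, hsb, hra, hrb, hx]
  nlinarith [mul_nonneg (sq_nonneg A₀) hH, Real.sq_sqrt (by positivity : (0 : ℝ) ≤ 1 + ra),
    Real.sq_sqrt (by positivity : (0 : ℝ) ≤ 1 + rb)]

lemma sq_sqrt_sub_sqrt_le (h : ScalarCondition κ G) {A₀ B₀ A B : ℝ} (hA₀ : 0 ≤ A₀)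
    (hB₀ : 0 ≤ B₀) (hA : |A| ≤ A₀) (hB : |B| ≤ B₀) :
    (√(A₀ ^ 2 + A ^ 2) - √(B₀ ^ 2 + B ^ 2)) ^ 2
      ≤ G * (A₀ - B₀) ^ 2 + (κ + 1) * (A ^ 2 + B ^ 2) := by
  rcases hA₀.eq_or_lt with hA₀ | hA₀
  · obtain rfl : A = 0 := abs_nonpos_iff.mp (hA.trans_eq hA₀.symm)
    subst hA₀
    rcases hB₀.eq_or_lt with hB₀ | hB₀
    · obtain rfl : B = 0 := abs_nonpos_iff.mp (hB.trans_eq hB₀.symm)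
      subst hB₀
      simp
    · have := h.sq_sqrt_sub_sqrt_le_of_pos (A := B) (B := 0) hB₀ le_rfl hB (by simp)
      linarith
  · exact h.sq_sqrt_sub_sqrt_le_of_pos hA₀ hB₀ hA hB

end ScalarCondition

lemma sq_norm_sub_norm_le_pairGain {n : ℕ} {γn γ2n : ℕ → ℝ} {k : ℕ}
    (hk : (γn k ≤ γ2n k ∧ γn k + 1 ≤ γ2n (n + k)) ∨ (γn k ≤ γ2n (n + k) ∧ γn k + 1 ≤ γ2n k))
    (a b : Fin n → ℝ) :
    (‖dftCoeff n a k‖ - ‖dftCoeff n b k‖) ^ 2 ≤ pairGain n γn γ2n a b k := by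
  have hnorm : ‖unitRoot (2 * n) ^ k * dftCoeff n b k‖ = ‖dftCoeff n b k‖ := by
    rw [norm_mul, norm_pow, norm_unitRoot, one_pow, one_mul]
  simpa only [pairGain, hnorm] using
    sq_norm_sub_norm_le_of_weights hk (dftCoeff n a k) (unitRoot (2 * n) ^ k * dftCoeff n b k)

lemma sq_sqrt_sub_sqrt_le_pairGain_zero_add_pairGain_self {m : ℕ} {γn γ2n : ℕ → ℝ} (hm : m ≠ 0)
    (h₀ : γn 0 = 0) (h₀' : γ2n 0 = 0) (hsym : γ2n (2 * m + m) = γ2n m)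
    (hscal : ScalarCondition (2 * γ2n m - 2 * γn m - 1) (γ2n (2 * m)))
    {a b : Fin (2 * m) → ℝ} (ha : ∀ i, 0 ≤ a i) (hb : ∀ i, 0 ≤ b i) :
    (√(‖dftCoeff (2 * m) a 0‖ ^ 2 + ‖dftCoeff (2 * m) a m‖ ^ 2)
        - √(‖dftCoeff (2 * m) b 0‖ ^ 2 + ‖dftCoeff (2 * m) b m‖ ^ 2)) ^ 2
      ≤ pairGain (2 * m) γn γ2n a b 0 + pairGain (2 * m) γn γ2n a b m := by
  rw [pairGain_zero h₀ h₀', pairGain_two_mul_self hm hsym, dftCoeff_zero, dftCoeff_zero,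
    dftCoeff_two_mul_self hm, dftCoeff_two_mul_self hm]
  simp only [Complex.norm_real, Real.norm_eq_abs, sq_abs]
  have h := hscal.sq_sqrt_sub_sqrt_le (Finset.sum_nonneg fun i _ => ha i)
    (Finset.sum_nonneg fun i _ => hb i) (abs_sum_neg_one_pow_mul_le ha)
    (abs_sum_neg_one_pow_mul_le hb)
  linarith

lemma weights_gap {m : ℕ} {γn γ2n : ℕ → ℝ}
    (hsymn : ∀ k, 1 ≤ k → k ≤ 2 * m - 1 → γn k = γn (2 * m - k))
    (hsym2n : ∀ k, 1 ≤ k → k ≤ 2 * (2 * m) - 1 → γ2n k = γ2n (2 * (2 * m) - k))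
    (hge : ∀ k, 1 ≤ k → k ≤ m - 1 → γn k ≤ γ2n k)
    (hgap : ∀ k, k ≤ m - 1 → 0 ≤ γ2n (2 * m - k) - γ2n k - 1)
    {k : ℕ} (hk₀ : k ≠ 0) (hk : k < 2 * m) (hkm : k ≠ m) :
    (γn k ≤ γ2n k ∧ γn k + 1 ≤ γ2n (2 * m + k))
      ∨ (γn k ≤ γ2n (2 * m + k) ∧ γn k + 1 ≤ γ2n k) := by
  have hout : γ2n (2 * m + k) = γ2n (2 * m - k) := by
    rw [hsym2n (2 * m + k) (by omega) (by omega),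
      show 2 * (2 * m) - (2 * m + k) = 2 * m - k by omega]
  rw [hout]
  rcases lt_or_gt_of_ne hkm with hlt | hgt
  · have h₁ := hge k (by omega) (by omega)
    have h₂ := hgap k (by omega)
    exact Or.inl ⟨h₁, by linarith⟩
  · have hk' : 2 * m - (2 * m - k) = k := by omega
    have h₁ := hsymn (2 * m - k) (by omega) (by omega)
    have h₂ := hge (2 * m - k) (by omega) (by omega)
    have h₃ := hgap (2 * m - k) (by omega)
    rw [hk'] at h₁ h₃
    exact Or.inr ⟨by linarith, by linarith⟩

lemma mul_sq_sqrt_sub_sqrt_le_sum {n : ℕ} (hn : n ≠ 0) (a b : Fin n → ℝ) (G : ℕ → ℝ)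
    {p q : ℕ} (hp : p < n) (hq : q < n) (hpq : p ≠ q)
    (hpair : (√(‖dftCoeff n a p‖ ^ 2 + ‖dftCoeff n a q‖ ^ 2)
        - √(‖dftCoeff n b p‖ ^ 2 + ‖dftCoeff n b q‖ ^ 2)) ^ 2 ≤ G p + G q)
    (hrest : ∀ k < n, k ≠ p → k ≠ q → (‖dftCoeff n a k‖ - ‖dftCoeff n b k‖) ^ 2 ≤ G k) :
    n * (√(∑ i, a i ^ 2) - √(∑ i, b i ^ 2)) ^ 2 ≤ ∑ k ∈ range n, G k := by
  set s := range n \ {p, q}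
  have hsplit : ∀ F : ℕ → ℝ, ∑ k ∈ range n, F k = F p + F q + ∑ k ∈ s, F k := by
    intro F
    rw [← Finset.sum_sdiff (s₁ := {p, q}) (by simp [Finset.insert_subset_iff, hp, hq]),
      Finset.sum_pair hpq]
    ring
  have hmem : ∀ k ∈ s, k < n ∧ k ≠ p ∧ k ≠ q := fun k hk => by
    simp only [s, Finset.mem_sdiff, Finset.mem_range, Finset.mem_insert, Finset.mem_singleton] at hk
    tauto
  have hn' : (0 : ℝ) ≤ n := Nat.cast_nonneg n
  calc (n : ℝ) * (√(∑ i, a i ^ 2) - √(∑ i, b i ^ 2)) ^ 2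
      = (√(∑ k ∈ range n, ‖dftCoeff n a k‖ ^ 2) - √(∑ k ∈ range n, ‖dftCoeff n b k‖ ^ 2)) ^ 2 := by
        rw [sum_sq_norm_dftCoeff hn, sum_sq_norm_dftCoeff hn, Real.sqrt_mul hn', Real.sqrt_mul hn',
          ← mul_sub, mul_pow, Real.sq_sqrt hn']
    _ ≤ (√(‖dftCoeff n a p‖ ^ 2 + ‖dftCoeff n a q‖ ^ 2)
          - √(‖dftCoeff n b p‖ ^ 2 + ‖dftCoeff n b q‖ ^ 2)) ^ 2
        + ∑ k ∈ s, (‖dftCoeff n a k‖ - ‖dftCoeff n b k‖) ^ 2 := by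
        rw [hsplit, hsplit]
        exact sq_sqrt_add_sum_sub_sqrt_add_sum_le s (by positivity) (by positivity) _ _
    _ ≤ G p + G q + ∑ k ∈ s, G k := by
        gcongr with k hk
        exact hrest k (hmem k hk).1 (hmem k hk).2.1 (hmem k hk).2.2
    _ = ∑ k ∈ range n, G k := (hsplit G).symm

theorem dirichlet_compare_even_general (n : ℕ) (hn : 4 ≤ n) (hne : Even n)
    (γn γ2n : ℕ → ℝ)
    (h00 : γn 0 = 0) (h00' : γ2n 0 = 0)
    (hsymn : ∀ k, 1 ≤ k → k ≤ n - 1 → γn k = γn (n - k))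
    (hsym2n : ∀ k, 1 ≤ k → k ≤ 2 * n - 1 → γ2n k = γ2n (2 * n - k))
    (hge : ∀ k, 1 ≤ k → k ≤ n / 2 - 1 → γn k ≤ γ2n k)
    (hgap : ∀ k, k ≤ n / 2 - 1 → 0 ≤ γ2n (n - k) - γ2n k - 1)
    (hscal : ∀ x : ℝ, 0 ≤ x → ∀ ra rb : ℝ, 0 ≤ ra → ra ≤ 1 → 0 ≤ rb → rb ≤ 1 →
      0 ≤ (2 * γ2n (n / 2) - 2 * γn (n / 2) - 1) * (ra + rb * x ^ 2)
          + γ2n n * (1 - x) ^ 2 - (1 + x ^ 2)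
          + 2 * x * Real.sqrt ((1 + ra) * (1 + rb)))
    (a b : Fin n → ℝ) (ha : ∀ i, 0 ≤ a i) (hb : ∀ i, 0 ≤ b i) :
    quadForm n (GammaMat n γn) a + quadForm n (GammaMat n γn) b
      + (((1 / (2 * n) : ℝ) *
          (Real.sqrt (∑ i, a i ^ 2) - Real.sqrt (∑ i, b i ^ 2)) ^ 2 : ℝ) : ℂ)
    ≤ 2 * quadForm (2 * n) (GammaMat (2 * n) γ2n) (interleave n a b) := by
  obtain ⟨m, rfl⟩ := even_iff_two_dvd.mp hne
  have hm : m ≠ 0 := by omega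
  rw [Nat.mul_div_cancel_left m two_pos] at hge hgap hscal
  have hsym : γ2n (2 * m + m) = γ2n m := by
    rw [hsym2n m (by omega) (by omega), show 2 * (2 * m) - m = 2 * m + m by omega]
  have hbound : ((2 * m : ℕ) : ℝ) * (√(∑ i, a i ^ 2) - √(∑ i, b i ^ 2)) ^ 2
      ≤ ∑ k ∈ range (2 * m), pairGain (2 * m) γn γ2n a b k :=
    mul_sq_sqrt_sub_sqrt_le_sum (by omega) a b _ (by omega) (by omega) (Ne.symm hm)
    (sq_sqrt_sub_sqrt_le_pairGain_zero_add_pairGain_self hm h00 h00' hsym hscal ha hb)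
    fun k hk hk₀ hkm => sq_norm_sub_norm_le_pairGain
      (weights_gap hsymn hsym2n hge hgap hk₀ hk hkm) a b
  rw [← sub_nonneg, sub_add_eq_sub_sub, sub_add_eq_sub_sub,
    two_mul_quadForm_interleave_sub (by omega), ← Complex.ofReal_sub, Complex.zero_le_real, sub_nonneg, le_div_iff₀ (by positivity)]
  refine (Eq.le ?_).trans hbound
  field_simp

/-- even case of the Dirichlet form comparison, Proposition 4.1:
under the compatibility conditions on the weight pair `(γ_n, γ_{2n})` and the
scalar inequality, the `n`-level Dirichlet forms are dominated by the `2n`-level one.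
The conclusion is an inequality in the complex order. -/
theorem dirichlet_compare_even (n : ℕ) (hn : 4 ≤ n) (hne : Even n)
    (γn γ2n : ℕ → ℝ)
    (hγn0 : ∀ k, k < n → 0 ≤ γn k) (hγ2n0 : ∀ k, k < 2 * n → 0 ≤ γ2n k)
    (h00 : γn 0 = 0) (h00' : γ2n 0 = 0)
    (hsymn : ∀ k, 1 ≤ k → k ≤ n - 1 → γn k = γn (n - k))
    (hsym2n : ∀ k, 1 ≤ k → k ≤ 2 * n - 1 → γ2n k = γ2n (2 * n - k))
    (hge : ∀ k, 1 ≤ k → k ≤ n / 2 - 1 → γn k ≤ γ2n k)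
    (hgap : ∀ k, k ≤ n / 2 - 1 → 0 ≤ γ2n (n - k) - γ2n k - 1)
    (hscal : ∀ x : ℝ, 0 ≤ x → ∀ ra rb : ℝ, 0 ≤ ra → ra ≤ 1 → 0 ≤ rb → rb ≤ 1 →
      0 ≤ (2 * γ2n (n / 2) - 2 * γn (n / 2) - 1) * (ra + rb * x ^ 2)
          + γ2n n * (1 - x) ^ 2 - (1 + x ^ 2)
          + 2 * x * Real.sqrt ((1 + ra) * (1 + rb)))
    (a b : Fin n → ℝ) (ha : ∀ i, 0 ≤ a i) (hb : ∀ i, 0 ≤ b i) :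
    quadForm n (GammaMat n γn) a + quadForm n (GammaMat n γn) b
      + (((1 / (2 * n) : ℝ) *
          (Real.sqrt (∑ i, a i ^ 2) - Real.sqrt (∑ i, b i ^ 2)) ^ 2 : ℝ) : ℂ)
    ≤ 2 * quadForm (2 * n) (GammaMat (2 * n) γ2n) (interleave n a b) :=
  dirichlet_compare_even_general n hn hne γn γ2n h00 h00' hsymn hsym2n hge hgap hscal a b ha hb
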